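/- arXiv:math/0508295 — 5 statements merged into one kernel-verified Lean document; each statement's English description precedes it below -/
import Mathlib

section
/- Let F = {(1,0,0),(1,0,1),(0,0,0)}, F' = {(0,1,0),(1,1,0),(0,0,0)} and F'' = {(0,0,1),(0,1,1),(0,0,0)} be the sets of exponent vectors of the monomials of p = z(1−z'')−1, p' = z'(1−z)−1 and p'' = z''(1−z')−1 respectively. A vector ξ ∈ ℝ³ has the property that, for each of the three sets F, F', F'', the maximum of the inner products α·ξ over the elements α of the set is attained by at least two distinct elements, if and only if ξ is of degeneration form, i.e. ξ = (0,x,−x), ξ = (−x,0,x) or ξ = (x,−x,0) for some real x ≥ 0. -/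
open Matrix

/-- A triple in `ℝ³` is of degeneration form if it equals `(0,x,−x)`, `(−x,0,x)`
or `(x,−x,0)` for some `x ≥ 0`. -/
def DegenerationForm (ξ : Fin 3 → ℝ) : Prop :=
  ∃ x : ℝ, 0 ≤ x ∧ (ξ = ![0, x, -x] ∨ ξ = ![-x, 0, x] ∨ ξ = ![x, -x, 0])

/-- Bergman's spherical-dual condition for a finite set `S` of exponent vectors:
the maximum of the inner products `α·ξ` over `α ∈ S` is attained by at least two
distinct elements of `S`. -/
def MaxAttainedTwice (S : Set (Fin 3 → ℝ)) (ξ : Fin 3 → ℝ) : Prop :=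
  ∃ α ∈ S, ∃ β ∈ S, α ≠ β ∧ (∀ γ ∈ S, γ ⬝ᵥ ξ ≤ α ⬝ᵥ ξ) ∧ α ⬝ᵥ ξ = β ⬝ᵥ ξ

lemma mat3 {u v w ξ : Fin 3 → ℝ} :
    MaxAttainedTwice {u, v, w} ξ ↔
      ((u ≠ v ∧ u ⬝ᵥ ξ = v ⬝ᵥ ξ ∧ w ⬝ᵥ ξ ≤ u ⬝ᵥ ξ) ∨
       (u ≠ w ∧ u ⬝ᵥ ξ = w ⬝ᵥ ξ ∧ v ⬝ᵥ ξ ≤ u ⬝ᵥ ξ) ∨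
       (v ≠ w ∧ v ⬝ᵥ ξ = w ⬝ᵥ ξ ∧ u ⬝ᵥ ξ ≤ v ⬝ᵥ ξ)) := by
  constructor
  · rintro ⟨α, hα, β, hβ, hne, hmax, heq⟩
    have hu := hmax u (by simp)
    have hv := hmax v (by simp)
    have hw := hmax w (by simp)
    simp only [Set.mem_insert_iff, Set.mem_singleton_iff] at hα hβ
    rcases hα with rfl | rfl | rfl <;> rcases hβ with rfl | rfl | rfl <;>
      first
      | exact absurd rfl hne
      | exact Or.inl ⟨hne, heq, hw⟩
      | exact Or.inl ⟨hne.symm, heq.symm, by linarith⟩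
      | exact Or.inr (Or.inl ⟨hne, heq, hv⟩)
      | exact Or.inr (Or.inl ⟨hne.symm, heq.symm, by linarith⟩)
      | exact Or.inr (Or.inr ⟨hne, heq, hu⟩)
      | exact Or.inr (Or.inr ⟨hne.symm, heq.symm, by linarith⟩)
  · rintro (⟨h1, h2, h3⟩ | ⟨h1, h2, h3⟩ | ⟨h1, h2, h3⟩)
    · refine ⟨u, by simp, v, by simp, h1, ?_, h2⟩
      rintro γ hγ
      simp only [Set.mem_insert_iff, Set.mem_singleton_iff] at hγ
      rcases hγ with rfl | rfl | rfl
      · exact le_refl _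
      · exact h2.ge
      · exact h3
    · refine ⟨u, by simp, w, by simp, h1, ?_, h2⟩
      rintro γ hγ
      simp only [Set.mem_insert_iff, Set.mem_singleton_iff] at hγ
      rcases hγ with rfl | rfl | rfl
      · exact le_refl _
      · exact h3
      · exact h2.ge
    · refine ⟨v, by simp, w, by simp, h1, ?_, h2⟩
      rintro γ hγ
      simp only [Set.mem_insert_iff, Set.mem_singleton_iff] at hγ
      rcases hγ with rfl | rfl | rfl
      · exact h3
      · exact le_refl _
      · exact h2.ge

/-- For the exponent-vector sets `F = {(1,0,0),(1,0,1),(0,0,0)}`,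
`F' = {(0,1,0),(1,1,0),(0,0,0)}` and `F'' = {(0,0,1),(0,1,1),(0,0,0)}` of the
parameter equations, a vector `ξ ∈ ℝ³` satisfies Bergman's spherical-dual
condition for all three sets if and only if `ξ` is of degeneration form. -/
theorem sphericalDual_parameter_iff_degeneration (ξ : Fin 3 → ℝ) :
    (MaxAttainedTwice {![1,0,0], ![1,0,1], ![0,0,0]} ξ ∧
     MaxAttainedTwice {![0,1,0], ![1,1,0], ![0,0,0]} ξ ∧
     MaxAttainedTwice {![0,0,1], ![0,1,1], ![0,0,0]} ξ) ↔
    DegenerationForm ξ := by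
  constructor
  · rintro ⟨hF, hF', hF''⟩
    rw [mat3] at hF hF' hF''
    simp only [dotProduct, Fin.sum_univ_three, Matrix.cons_val_zero, Matrix.cons_val_one,
      Matrix.head_cons, Matrix.cons_val_two, Matrix.tail_cons, one_mul, zero_mul, add_zero,
      zero_add, ne_eq, funext_iff, Fin.forall_fin_succ] at hF hF' hF''
    norm_num at hF hF' hF''
    rcases hF with ⟨h1, h2⟩ | ⟨h1, h2⟩ | ⟨h1, h2⟩ <;>
      rcases hF' with ⟨h3, h4⟩ | ⟨h3, h4⟩ | ⟨h3, h4⟩ <;>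
        rcases hF'' with ⟨h5, h6⟩ | ⟨h5, h6⟩ | ⟨h5, h6⟩ <;>
    first
    | (refine ⟨ξ 1, ?_, Or.inl ?_⟩ <;>
        first
        | linarith
        | (funext i; fin_cases i <;> simp <;> linarith))
    | (refine ⟨ξ 2, ?_, Or.inr (Or.inl ?_)⟩ <;>
        first
        | linarith
        | (funext i; fin_cases i <;> simp <;> linarith))
    | (refine ⟨ξ 0, ?_, Or.inr (Or.inr ?_)⟩ <;>
        first
        | linarith
        | (funext i; fin_cases i <;> simp <;> linarith))
  · rintro ⟨x, hx, (rfl | rfl | rfl)⟩ <;>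
      refine ⟨mat3.mpr ?_, mat3.mpr ?_, mat3.mpr ?_⟩ <;>
    first
    | (refine Or.inl ⟨?_, ?_, ?_⟩ <;>
        (try simp [funext_iff, Fin.forall_fin_succ, dotProduct, Fin.sum_univ_three]) <;>
        linarith)
    | (refine Or.inr (Or.inl ⟨?_, ?_, ?_⟩) <;>
        (try simp [funext_iff, Fin.forall_fin_succ, dotProduct, Fin.sum_univ_three]) <;>
        linarith)
    | (refine Or.inr (Or.inr ⟨?_, ?_, ?_⟩) <;>
        (try simp [funext_iff, Fin.forall_fin_succ, dotProduct, Fin.sum_univ_three]) <;>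
        linarith)
end

section
/- Let m, n ≥ 1, let A be a real m × 3n matrix with columns indexed by Fin n × Fin 3, and set B = A · C_n. Let PF be the set of all admissible vectors N : Fin n × Fin 3 → ℝ with B·N = 0 and Σ N(j,k)² = 1/2, and let D be the set of all vectors ξ : Fin n × Fin 3 → ℝ such that each triple (ξ(j,0), ξ(j,1), ξ(j,2)) is of degeneration form, A·ξ = 0, and Σ ξ(j,k)² = 1. Then the map N ↦ C_nᵀ · N is a bijection from PF onto D. -/
open Matrix

/-- The matrix `C₁`, with rows `(0,1,−1)`, `(−1,0,1)`, `(1,−1,0)`. -/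
def Cone : Matrix (Fin 3) (Fin 3) ℝ := !![0, 1, -1; -1, 0, 1; 1, -1, 0]

/-- The `3n × 3n` block diagonal matrix `C_n` with `n` copies of `C₁` on its
diagonal, rows and columns indexed by `Fin n × Fin 3`. -/
def Cblock (n : ℕ) : Matrix (Fin n × Fin 3) (Fin n × Fin 3) ℝ :=
  fun p q => if p.1 = q.1 then Cone p.2 q.2 else 0

/-- A vector is admissible if all its coordinates are `≥ 0` and in each block at
most one coordinate is nonzero. -/
def Admissible {n : ℕ} (N : Fin n × Fin 3 → ℝ) : Prop :=
  (∀ p, 0 ≤ N p) ∧ ∀ (j : Fin n) (k k' : Fin 3), N (j, k) ≠ 0 → N (j, k') ≠ 0 → k = k'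

/-!
Since `C₁ᵀ = -C₁`, also `C_nᵀ = -C_n`, so `A·(C_nᵀ N) = -B·N` and the two kernel conditions
correspond. Everything else happens block by block: an admissible triple is `x·e_k` with `x ≥ 0`,
and `C₁ᵀ` sends `x·e₀, x·e₁, x·e₂` to `(0,x,-x), (-x,0,x), (x,-x,0)`, which doubles the square
norm.
-/

open Function

def IsNonnegSingle (v : Fin 3 → ℝ) : Prop :=
  ∃ x : ℝ, 0 ≤ x ∧ (v = ![x, 0, 0] ∨ v = ![0, x, 0] ∨ v = ![0, 0, x])

/-- The inverse of `v ↦ C₁ᵀ v` from triples of degeneration form back to `IsNonnegSingle`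
triples. -/
def posPartShift (ξ : Fin 3 → ℝ) : Fin 3 → ℝ := fun k => max (ξ (k + 1)) 0

lemma isNonnegSingle_iff {v : Fin 3 → ℝ} :
    IsNonnegSingle v ↔ (∀ k, 0 ≤ v k) ∧ ∀ k k', v k ≠ 0 → v k' ≠ 0 → k = k' := by
  constructor
  · rintro ⟨x, hx, rfl | rfl | rfl⟩ <;> refine ⟨fun k => ?_, fun k k' => ?_⟩ <;>
      fin_cases k <;> try fin_cases k'
    all_goals simp [hx]
  · rintro ⟨hnonneg, hexcl⟩
    have hzero (k k' : Fin 3) (hne : k ≠ k') : v k = 0 ∨ v k' = 0 := by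
      by_contra! h
      exact hne (hexcl k k' h.1 h.2)
    -- at most one summand is nonzero
    refine ⟨v 0 + v 1 + v 2, by linarith [hnonneg 0, hnonneg 1, hnonneg 2], ?_⟩
    rcases hzero 0 1 (by decide) with h01 | h01 <;> rcases hzero 0 2 (by decide) with h02 | h02 <;>
      rcases hzero 1 2 (by decide) with h12 | h12 <;>
      simp [funext_iff, Fin.forall_fin_succ, *]

lemma cone_transpose_mulVec (a b c : ℝ) :
    Coneᵀ *ᵥ ![a, b, c] = ![c - b, a - c, b - a] := by
  ext k
  fin_cases k <;> simp [Cone, mulVec, dotProduct, Fin.sum_univ_three] <;> ring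

lemma posPartShift_vec (a b c : ℝ) :
    posPartShift ![a, b, c] = ![max b 0, max c 0, max a 0] := by
  ext k
  fin_cases k <;> rfl

lemma IsNonnegSingle.degenerationForm {v : Fin 3 → ℝ} (hv : IsNonnegSingle v) :
    DegenerationForm (Coneᵀ *ᵥ v) := by
  obtain ⟨x, hx, rfl | rfl | rfl⟩ := hv <;> refine ⟨x, hx, ?_⟩ <;>
    simp [cone_transpose_mulVec]

lemma IsNonnegSingle.posPartShift_cone_transpose_mulVec {v : Fin 3 → ℝ}
    (hv : IsNonnegSingle v) : posPartShift (Coneᵀ *ᵥ v) = v := by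
  obtain ⟨x, hx, rfl | rfl | rfl⟩ := hv <;>
    simp [cone_transpose_mulVec, posPartShift_vec, hx]

lemma DegenerationForm.isNonnegSingle_posPartShift {ξ : Fin 3 → ℝ}
    (hξ : DegenerationForm ξ) : IsNonnegSingle (posPartShift ξ) := by
  obtain ⟨x, hx, rfl | rfl | rfl⟩ := hξ <;> refine ⟨x, hx, ?_⟩ <;>
    simp [posPartShift_vec, hx]

lemma DegenerationForm.cone_transpose_mulVec_posPartShift {ξ : Fin 3 → ℝ}
    (hξ : DegenerationForm ξ) : Coneᵀ *ᵥ posPartShift ξ = ξ := by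
  obtain ⟨x, hx, rfl | rfl | rfl⟩ := hξ <;>
    simp [posPartShift_vec, cone_transpose_mulVec, hx]

lemma DegenerationForm.sum_sq_posPartShift {ξ : Fin 3 → ℝ} (hξ : DegenerationForm ξ) :
    ∑ k, posPartShift ξ k ^ 2 = (∑ k, ξ k ^ 2) / 2 := by
  obtain ⟨x, hx, rfl | rfl | rfl⟩ := hξ <;>
    simp [posPartShift_vec, hx, Fin.sum_univ_three]

section Blocks

variable {n : ℕ}

lemma cblock_transpose : (Cblock n)ᵀ = -Cblock n := by
  ext ⟨j, k⟩ ⟨j', k'⟩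
  by_cases h : j = j'
  · subst h
    fin_cases k <;> fin_cases k' <;> simp [Cblock, Cone]
  · simp [Cblock, h, Ne.symm h]

lemma mulVec_cblock_transpose_mulVec {ι : Type*} [Fintype ι] (A : Matrix ι (Fin n × Fin 3) ℝ)
    (N : Fin n × Fin 3 → ℝ) : A *ᵥ ((Cblock n)ᵀ *ᵥ N) = -((A * Cblock n) *ᵥ N) := by
  rw [cblock_transpose, neg_mulVec, mulVec_neg, mulVec_mulVec]

lemma curry_cblock_transpose_mulVec (N : Fin n × Fin 3 → ℝ) (j : Fin n) :
    curry ((Cblock n)ᵀ *ᵥ N) j = Coneᵀ *ᵥ curry N j := by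
  ext k
  simp [mulVec, dotProduct, Cblock, Fintype.sum_prod_type, ite_mul]

lemma admissible_iff {N : Fin n × Fin 3 → ℝ} :
    Admissible N ↔ ∀ j, IsNonnegSingle (curry N j) := by
  simp only [Admissible, isNonnegSingle_iff, forall_and, Prod.forall, curry_apply]

def blockPosPartShift (ξ : Fin n × Fin 3 → ℝ) : Fin n × Fin 3 → ℝ :=
  uncurry fun j => posPartShift (curry ξ j)

lemma Admissible.degenerationForm {N : Fin n × Fin 3 → ℝ} (hN : Admissible N) (j : Fin n) :
    DegenerationForm (curry ((Cblock n)ᵀ *ᵥ N) j) := by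
  rw [curry_cblock_transpose_mulVec]
  exact (admissible_iff.1 hN j).degenerationForm

lemma Admissible.blockPosPartShift_cblock_transpose_mulVec {N : Fin n × Fin 3 → ℝ}
    (hN : Admissible N) : blockPosPartShift ((Cblock n)ᵀ *ᵥ N) = N := by
  refine curry_injective (funext fun j => ?_)
  rw [blockPosPartShift, curry_uncurry, curry_cblock_transpose_mulVec]
  exact (admissible_iff.1 hN j).posPartShift_cone_transpose_mulVec

variable {ξ : Fin n × Fin 3 → ℝ}

lemma admissible_blockPosPartShift (hξ : ∀ j, DegenerationForm (curry ξ j)) :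
    Admissible (blockPosPartShift ξ) :=
  admissible_iff.2 fun j => by
    simpa [blockPosPartShift] using (hξ j).isNonnegSingle_posPartShift

lemma cblock_transpose_mulVec_blockPosPartShift (hξ : ∀ j, DegenerationForm (curry ξ j)) :
    (Cblock n)ᵀ *ᵥ blockPosPartShift ξ = ξ := by
  refine curry_injective (funext fun j => ?_)
  rw [curry_cblock_transpose_mulVec, blockPosPartShift, curry_uncurry]
  exact (hξ j).cone_transpose_mulVec_posPartShift

lemma sum_sq_blockPosPartShift (hξ : ∀ j, DegenerationForm (curry ξ j)) :
    ∑ p, blockPosPartShift ξ p ^ 2 = (∑ p, ξ p ^ 2) / 2 := by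
  rw [Fintype.sum_prod_type, Fintype.sum_prod_type, Finset.sum_div]
  exact Finset.sum_congr rfl fun j _ => (hξ j).sum_sq_posPartShift

end Blocks

theorem bijection_PF_to_prevariety_general (m n : ℕ)
    (A : Matrix (Fin m) (Fin n × Fin 3) ℝ) :
    Set.BijOn (Cblock n)ᵀ.mulVec
      {N : Fin n × Fin 3 → ℝ | Admissible N ∧ (A * Cblock n).mulVec N = 0 ∧
        ∑ p, (N p) ^ 2 = 1 / 2}
      {ξ : Fin n × Fin 3 → ℝ |
        (∀ j : Fin n, DegenerationForm fun k => ξ (j, k)) ∧ A.mulVec ξ = 0 ∧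
        ∑ p, (ξ p) ^ 2 = 1} := by
  refine Set.InvOn.bijOn (f' := blockPosPartShift) ⟨?_, ?_⟩ ?_ ?_
  · rintro N ⟨hN, -, -⟩
    exact hN.blockPosPartShift_cblock_transpose_mulVec
  · rintro ξ ⟨hξ, -, -⟩
    exact cblock_transpose_mulVec_blockPosPartShift hξ
  · rintro N ⟨hN, hB, hsum⟩
    have hhalf := sum_sq_blockPosPartShift hN.degenerationForm
    rw [hN.blockPosPartShift_cblock_transpose_mulVec, hsum] at hhalf
    refine ⟨hN.degenerationForm, ?_, by linarith⟩
    rw [mulVec_cblock_transpose_mulVec, hB, neg_zero]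
  · rintro ξ ⟨hξ, hA, hsum⟩
    refine ⟨admissible_blockPosPartShift hξ, ?_, ?_⟩
    · rw [← neg_eq_zero, ← mulVec_cblock_transpose_mulVec,
        cblock_transpose_mulVec_blockPosPartShift hξ, hA]
    · rw [sum_sq_blockPosPartShift hξ, hsum]

/-- The map `N ↦ C_nᵀ · N` is a bijection from the projective admissible solution
space `PF` (admissible vectors in the kernel of `B = A·C_n` of square-norm `1/2`)
onto the tropical pre-variety `D` (vectors of blockwise degeneration form in the
kernel of `A` of square-norm `1`). -/
theorem bijection_PF_to_prevariety (m n : ℕ) (hm : 1 ≤ m) (hn : 1 ≤ n)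
    (A : Matrix (Fin m) (Fin n × Fin 3) ℝ) :
    Set.BijOn (Cblock n)ᵀ.mulVec
      {N : Fin n × Fin 3 → ℝ | Admissible N ∧ (A * Cblock n).mulVec N = 0 ∧
        ∑ p, (N p) ^ 2 = 1 / 2}
      {ξ : Fin n × Fin 3 → ℝ |
        (∀ j : Fin n, DegenerationForm fun k => ξ (j, k)) ∧ A.mulVec ξ = 0 ∧
        ∑ p, (ξ p) ^ 2 = 1} :=
  bijection_PF_to_prevariety_general m n A
end

section
/- In the hyperbolic upper half-plane ℍ, let T = {z ∈ ℍ : 0 ≤ Re z ≤ 1 and |z − 1/2| ≥ 1/2} be the ideal triangle with ideal vertices 0, 1, ∞, and let Σ = {1/2 + it : t ≥ √3/2} ∪ {z ∈ ℍ : |z| = 1 and 1/2 ≤ Re z < 1} ∪ {z ∈ ℍ : |z − 1| = 1 and 0 < Re z ≤ 1/2} be its geometric spine, consisting of the three perpendicular rays from the centre of mass c = (1 + i√3)/2 to the three ideal vertices. Then Σ is (log √3)-dense in T: for every z ∈ T the infimal hyperbolic distance from z to Σ is at most log √3. -/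
open UpperHalfPlane

private lemma sqrt3_sq : Real.sqrt 3 * Real.sqrt 3 = 3 := Real.mul_self_sqrt (by norm_num)

private lemma le_of_sq_le_sq' (a b : ℝ) (ha : 0 ≤ a) (hb : 0 ≤ b) (h : a^2 ≤ b^2) : a ≤ b := by
  nlinarith

private lemma dist_le_aux (z w : UpperHalfPlane)
    (h : Real.sqrt 3 * ((z.re - w.re)^2 + (z.im - w.im)^2) ≤ (2 - Real.sqrt 3) * (2 * z.im * w.im)) :
    dist z w ≤ Real.log (Real.sqrt 3) := by
  have h3 : (0:ℝ) < Real.sqrt 3 := by positivity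
  have hzim := z.im_pos
  have hwim := w.im_pos
  have habs : dist (z:ℂ) (w:ℂ)^2 = (z.re - w.re)^2 + (z.im - w.im)^2 := by
    rw [Complex.dist_eq, Complex.sq_norm, Complex.normSq_apply]
    simp only [Complex.sub_re, Complex.sub_im, UpperHalfPlane.coe_re, UpperHalfPlane.coe_im]
    ring
  have hcosh : Real.cosh (dist z w) ≤ Real.cosh (Real.log (Real.sqrt 3)) := by
    rw [UpperHalfPlane.cosh_dist, Real.cosh_log h3]
    have key : dist (z:ℂ) (w:ℂ)^2 / (2 * z.im * w.im) ≤ (2 - Real.sqrt 3) / Real.sqrt 3 := by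
      rw [div_le_div_iff₀ (by positivity) h3, habs]
      nlinarith [h, mul_pos hzim hwim]
    have heq : (Real.sqrt 3 + (Real.sqrt 3)⁻¹) / 2 - 1 = (2 - Real.sqrt 3) / Real.sqrt 3 := by
      field_simp
      nlinarith [sqrt3_sq]
    linarith
  have := Real.cosh_le_cosh.mp hcosh
  rwa [abs_of_nonneg dist_nonneg, abs_of_nonneg (Real.log_nonneg (by
    rw [show (1:ℝ) = Real.sqrt 1 by simp]; exact Real.sqrt_le_sqrt (by norm_num)))] at this

/-- Core estimate for the region near the arc `|w-1|=1`. -/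
private lemma coreB (x y : ℝ) (hy : 0 < y) (hx0 : 0 ≤ x) (hx : x ≤ 1/2)
    (hu1 : x^2 + y^2 ≤ 1) (hux : x ≤ x^2 + y^2) :
    ∃ a b : ℝ, 0 < b ∧ a^2 + b^2 = 1 ∧ -1 < a ∧ a ≤ -(1/2) ∧
      Real.sqrt 3 * ((x - (1+a))^2 + (y - b)^2) ≤ (2 - Real.sqrt 3) * (2 * y * b) := by
  obtain ⟨q, hq⟩ : ∃ q : ℝ, q = (x-1)^2 + y^2 := ⟨_, rfl⟩
  have hq1 : 0 < q + 1 := by rw [hq]; positivity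
  obtain ⟨a, hadef⟩ : ∃ a : ℝ, a = 2*(x-1)/(q+1) := ⟨_, rfl⟩
  have ha : a * (q+1) = 2*(x-1) := by
    rw [hadef]; field_simp
  have ha1 : -1 < a := by
    rw [hadef, lt_div_iff₀ hq1]
    nlinarith [sq_nonneg x, sq_nonneg y, hy, hq]
  have ha2 : a ≤ -(1/2) := by
    rw [hadef, div_le_iff₀ hq1]
    nlinarith [hq]
  have ha3 : a^2 < 1 := by nlinarith
  obtain ⟨b, hbdef⟩ : ∃ b : ℝ, b = Real.sqrt (1 - a^2) := ⟨_, rfl⟩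
  have hb2 : b^2 = 1 - a^2 := by rw [hbdef]; exact Real.sq_sqrt (by linarith)
  have hb : 0 < b := by rw [hbdef]; exact Real.sqrt_pos.mpr (by linarith)
  refine ⟨a, b, hb, by linarith, ha1, ha2, ?_⟩
  have core : 3*(x^2+y^2-2*x)^2 ≤ 4*y^2 := by
    nlinarith [mul_nonneg (sub_nonneg.2 hux) (sub_nonneg.2 hu1),
      mul_nonneg (by linarith : (0:ℝ) ≤ 9*x+1) (sub_nonneg.2 hux),
      mul_nonneg hx0 (by linarith : (0:ℝ) ≤ 4-7*x)]
  have hid : (q+1)^2 - (2*(x-1))^2 = (x^2+y^2-2*x)^2 + 4*y^2 := by rw [hq]; ring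
  have hsq : (Real.sqrt 3 * ((q+1)*b))^2 = 3*((q+1)^2 - (2*(x-1))^2) := by
    have s3 := sqrt3_sq
    linear_combination (((q+1)*b)^2) * s3 + (3*(q+1)^2) * hb2 - (3*(a*(q+1)+2*(x-1))) * ha
  have key : Real.sqrt 3 * ((q+1)*b) ≤ 4*y := by
    apply le_of_sq_le_sq' _ _ (by positivity) (by positivity)
    rw [hsq, hid]; nlinarith [core]
  have hexp : (x - (1+a))^2 + (y - b)^2 = (q+1)*b^2 - 2*y*b := by
    linear_combination a * ha - q * hb2 - hq
  rw [hexp]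
  nlinarith [mul_le_mul_of_nonneg_right key hb.le]

private lemma coreA (x y : ℝ) (hy : 0 < y) (h3 : 3*(x-1/2)^2 ≤ y^2)
    (hs : 3/4 ≤ (x-1/2)^2 + y^2) :
    ∃ s : ℝ, 0 < s ∧ Real.sqrt 3/2 ≤ s ∧
      Real.sqrt 3 * ((x - 1/2)^2 + (y - s)^2) ≤ (2 - Real.sqrt 3) * (2*y*s) := by
  obtain ⟨s, hsdef⟩ : ∃ s : ℝ, s = Real.sqrt ((x-1/2)^2 + y^2) := ⟨_, rfl⟩
  have hs2 : s^2 = (x-1/2)^2 + y^2 := by rw [hsdef]; exact Real.sq_sqrt (by positivity)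
  have hspos : 0 < s := by rw [hsdef]; exact Real.sqrt_pos.mpr (by positivity)
  have hge : Real.sqrt 3/2 ≤ s :=
    le_of_sq_le_sq' _ _ (by positivity) hspos.le (by nlinarith [sqrt3_sq])
  have key : Real.sqrt 3 * s ≤ 2*y :=
    le_of_sq_le_sq' _ _ (by positivity) (by positivity) (by nlinarith [sqrt3_sq])
  refine ⟨s, hspos, hge, ?_⟩
  nlinarith [mul_le_mul_of_nonneg_right key hspos.le]

/-- The geometric spine of the ideal triangle `T` with ideal vertices `0`, `1`,
`∞` in the hyperbolic upper half-plane is `(log √3)`-dense in `T`: every point of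
`T = {0 ≤ Re z ≤ 1, |z − 1/2| ≥ 1/2}` is within hyperbolic distance `log √3` of
the union of the three perpendicular rays from the centre of mass `(1 + i√3)/2`
to the ideal vertices. -/
theorem geometric_spine_dense (z : UpperHalfPlane)
    (hz : 0 ≤ z.re ∧ z.re ≤ 1 ∧ 1 / 2 ≤ ‖(z : ℂ) - 1 / 2‖) :
    Metric.infDist z
        ({w : UpperHalfPlane | w.re = 1 / 2 ∧ Real.sqrt 3 / 2 ≤ w.im} ∪
          {w : UpperHalfPlane | ‖(w : ℂ)‖ = 1 ∧ 1 / 2 ≤ w.re ∧ w.re < 1} ∪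
          {w : UpperHalfPlane | ‖(w : ℂ) - 1‖ = 1 ∧ 0 < w.re ∧ w.re ≤ 1 / 2}) ≤
      Real.log (Real.sqrt 3) := by
  obtain ⟨h0, h1, hT⟩ := hz
  have hy := z.im_pos
  have hTT : z.re ≤ z.re^2 + z.im^2 := by
    have h2 : (1/2:ℝ)^2 ≤ ‖(z:ℂ) - 1/2‖^2 :=
      pow_le_pow_left₀ (by norm_num) hT 2
    rw [Complex.sq_norm, Complex.normSq_apply] at h2
    simp only [Complex.sub_re, Complex.sub_im, UpperHalfPlane.coe_re,
      UpperHalfPlane.coe_im] at h2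
    have hre : ((1:ℂ)/2).re = 1/2 := by norm_num
    have him : ((1:ℂ)/2).im = 0 := by norm_num
    rw [hre, him] at h2
    nlinarith [h2]
  -- case A helper
  have caseA : 3*(z.re-1/2)^2 ≤ z.im^2 → 3/4 ≤ (z.re-1/2)^2 + z.im^2 →
      Metric.infDist z
        ({w : UpperHalfPlane | w.re = 1 / 2 ∧ Real.sqrt 3 / 2 ≤ w.im} ∪
          {w : UpperHalfPlane | ‖(w : ℂ)‖ = 1 ∧ 1 / 2 ≤ w.re ∧ w.re < 1} ∪
          {w : UpperHalfPlane | ‖(w : ℂ) - 1‖ = 1 ∧ 0 < w.re ∧ w.re ≤ 1 / 2}) ≤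
      Real.log (Real.sqrt 3) := by
    intro hc1 hc2
    obtain ⟨s, hspos, hge, hkey⟩ := coreA z.re z.im hy hc1 hc2
    refine le_trans (Metric.infDist_le_dist_of_mem (y := UpperHalfPlane.mk ⟨1/2, s⟩ hspos)
      (Or.inl (Or.inl ⟨rfl, hge⟩))) ?_
    apply dist_le_aux
    convert hkey using 3 <;> rfl
  have habs2 : ∀ a b : ℝ, a^2 + b^2 = 1 → ‖(⟨a, b⟩ : ℂ)‖ = 1 := by
    intro a b hab
    rw [Complex.norm_def, Complex.normSq_apply]
    show Real.sqrt (a*a + b*b) = 1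
    rw [show a*a + b*b = 1 by nlinarith]
    exact Real.sqrt_one
  rcases le_or_gt z.re (1/2) with hx | hx
  · rcases le_or_gt 1 (z.re^2 + z.im^2) with hA | hB
    · exact caseA (by nlinarith) (by nlinarith)
    · -- case B : near the arc |w-1| = 1
      obtain ⟨a, b, hb, hab, ha1, ha2, hkey⟩ :=
        coreB z.re z.im hy h0 hx hB.le hTT
      refine le_trans (Metric.infDist_le_dist_of_mem
        (y := UpperHalfPlane.mk ⟨1+a, b⟩ hb) (Or.inr ⟨?_, ?_, ?_⟩)) ?_
      · have : (UpperHalfPlane.mk ⟨1+a, b⟩ hb : ℂ) - 1 = ⟨a, b⟩ := by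
          apply Complex.ext <;> simp [UpperHalfPlane.coe_mk]
        rw [this]; exact habs2 a b hab
      · show (0:ℝ) < 1 + a; linarith
      · show (1:ℝ) + a ≤ 1/2; linarith
      · apply dist_le_aux
        convert hkey using 3 <;> rfl
  · rcases le_or_gt 1 ((z.re-1)^2 + z.im^2) with hA | hC
    · exact caseA (by nlinarith) (by nlinarith)
    · -- case C : near the arc |w| = 1
      obtain ⟨a, b, hb, hab, ha1, ha2, hkey⟩ :=
        coreB (1-z.re) z.im hy (by linarith) (by linarith)
          (by nlinarith) (by nlinarith)
      refine le_trans (Metric.infDist_le_dist_of_mem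
        (y := UpperHalfPlane.mk ⟨-a, b⟩ hb) (Or.inl (Or.inr ⟨?_, ?_, ?_⟩))) ?_
      · show ‖(⟨-a, b⟩ : ℂ)‖ = 1
        exact habs2 (-a) b (by nlinarith)
      · show (1:ℝ)/2 ≤ -a; linarith
      · show -a < (1:ℝ); linarith
      · apply dist_le_aux
        have : (1 - z.re - (1+a))^2 = (z.re - -a)^2 := by ring
        rw [this] at hkey
        convert hkey using 3 <;> rfl
end

section
/- In the group G with presentation ⟨a, m ∣ a m a⁻² m = m a m a⁻¹⟩, let ℓ = m⁻¹ a m a⁻¹ m⁻¹ a⁻¹ m a, k₁ = m a⁻² m and k₂ = a⁻¹ m a⁻¹. Then k₂ k₁ k₂⁻¹ k₁ = a m⁻¹ a⁻¹ (m⁴ ℓ) a m a⁻¹. In particular, k₂ k₁ k₂⁻¹ k₁ is conjugate to m⁴ℓ, so in the quotient of G by the normal closure of m⁴ℓ the elements k₁, k₂ satisfy the Klein bottle relation k₂k₁k₂⁻¹k₁ = 1. -/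
/-- In any group generated by elements `a, m` satisfying the figure-eight
relation `a m a⁻² m = m a m a⁻¹` (in particular in the figure-eight knot group
`⟨a, m ∣ a m a⁻² m = m a m a⁻¹⟩`), with longitude `ℓ = m⁻¹ a m a⁻¹ m⁻¹ a⁻¹ m a`
and Klein bottle generators `k₁ = m a⁻² m`, `k₂ = a⁻¹ m a⁻¹`, one has
`k₂ k₁ k₂⁻¹ k₁ = a m⁻¹ a⁻¹ (m⁴ ℓ) a m a⁻¹`; hence `k₂ k₁ k₂⁻¹ k₁` is conjugate
to `m⁴ℓ`, and in the quotient by the normal closure of `m⁴ℓ` (the Dehn filling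
`M(4,1)`) the elements `k₁, k₂` satisfy the Klein bottle relation. -/
theorem figure_eight_klein_bottle_relation {G : Type*} [Group G] (a m : G)
    (hrel : a * m * a⁻¹ * a⁻¹ * m = m * a * m * a⁻¹) :
    (a⁻¹ * m * a⁻¹) * (m * a⁻¹ * a⁻¹ * m) * (a⁻¹ * m * a⁻¹)⁻¹ * (m * a⁻¹ * a⁻¹ * m) =
      a * m⁻¹ * a⁻¹ * (m ^ 4 * (m⁻¹ * a * m * a⁻¹ * m⁻¹ * a⁻¹ * m * a)) * a * m * a⁻¹ ∧
    (m ^ 4 * (m⁻¹ * a * m * a⁻¹ * m⁻¹ * a⁻¹ * m * a) = 1 →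
      (a⁻¹ * m * a⁻¹) * (m * a⁻¹ * a⁻¹ * m) * (a⁻¹ * m * a⁻¹)⁻¹ *
        (m * a⁻¹ * a⁻¹ * m) = 1) := by
  have hB : m * a⁻¹ * a⁻¹ * m = a⁻¹ * m * a * m * a⁻¹ := by
    calc m * a⁻¹ * a⁻¹ * m = a⁻¹ * (a * m * a⁻¹ * a⁻¹ * m) := by group
      _ = a⁻¹ * (m * a * m * a⁻¹) := by rw [hrel]
      _ = a⁻¹ * m * a * m * a⁻¹ := by group
  have h1 : a * m * a⁻¹ * a⁻¹ * a⁻¹ * m * a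
      = m * (a * m * a⁻¹ * m⁻¹ * a⁻¹ * m * a) := by
    calc a * m * a⁻¹ * a⁻¹ * a⁻¹ * m * a
        = a * m * a⁻¹ * a⁻¹ * m * (m⁻¹ * a⁻¹ * m * a) := by group
      _ = m * a * m * a⁻¹ * (m⁻¹ * a⁻¹ * m * a) := by rw [hrel]
      _ = m * (a * m * a⁻¹ * m⁻¹ * a⁻¹ * m * a) := by group
  have h2 : a * m * a⁻¹ * a⁻¹ * a⁻¹ * m * a
      = (a * m * a⁻¹ * m⁻¹ * a⁻¹ * m * a) * m := by
    calc a * m * a⁻¹ * a⁻¹ * a⁻¹ * m * a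
        = a * m * a⁻¹ * m⁻¹ * (m * a⁻¹ * a⁻¹ * m) * a := by group
      _ = a * m * a⁻¹ * m⁻¹ * (a⁻¹ * m * a * m * a⁻¹) * a := by rw [hB]
      _ = (a * m * a⁻¹ * m⁻¹ * a⁻¹ * m * a) * m := by group
  have hcomm : m * (a * m * a⁻¹ * a⁻¹ * a⁻¹ * m * a)
      = (a * m * a⁻¹ * a⁻¹ * a⁻¹ * m * a) * m := by
    calc m * (a * m * a⁻¹ * a⁻¹ * a⁻¹ * m * a)
        = m * ((a * m * a⁻¹ * m⁻¹ * a⁻¹ * m * a) * m) := by rw [h2]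
      _ = m * (a * m * a⁻¹ * m⁻¹ * a⁻¹ * m * a) * m := by group
      _ = (a * m * a⁻¹ * a⁻¹ * a⁻¹ * m * a) * m := by rw [h1]
  have hK : m ^ 4 * (m⁻¹ * a * m * a⁻¹ * m⁻¹ * a⁻¹ * m * a)
      = a * m * a⁻¹ * a⁻¹ * a⁻¹ * m * a * m * m := by
    calc m ^ 4 * (m⁻¹ * a * m * a⁻¹ * m⁻¹ * a⁻¹ * m * a)
        = m * (m * (m * a * m * a⁻¹ * (m⁻¹ * a⁻¹ * m * a))) := by
          rw [pow_succ, pow_succ, pow_succ, pow_one]; group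
      _ = m * (m * (a * m * a⁻¹ * a⁻¹ * m * (m⁻¹ * a⁻¹ * m * a))) := by rw [← hrel]
      _ = m * (m * (a * m * a⁻¹ * a⁻¹ * a⁻¹ * m * a)) := by group
      _ = m * ((a * m * a⁻¹ * a⁻¹ * a⁻¹ * m * a) * m) := by rw [hcomm]
      _ = m * (a * m * a⁻¹ * a⁻¹ * a⁻¹ * m * a) * m := by group
      _ = (a * m * a⁻¹ * a⁻¹ * a⁻¹ * m * a) * m * m := by rw [hcomm]
      _ = a * m * a⁻¹ * a⁻¹ * a⁻¹ * m * a * m * m := by group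
  have heq : (a⁻¹ * m * a⁻¹) * (m * a⁻¹ * a⁻¹ * m) * (a⁻¹ * m * a⁻¹)⁻¹ * (m * a⁻¹ * a⁻¹ * m) =
      a * m⁻¹ * a⁻¹ * (m ^ 4 * (m⁻¹ * a * m * a⁻¹ * m⁻¹ * a⁻¹ * m * a)) * a * m * a⁻¹ := by
    rw [hK, hB]
    calc (a⁻¹ * m * a⁻¹) * (a⁻¹ * m * a * m * a⁻¹) * (a⁻¹ * m * a⁻¹)⁻¹ *
          (a⁻¹ * m * a * m * a⁻¹)
        = a⁻¹ * (m * a⁻¹ * a⁻¹ * m) * (a * m * a * m * a⁻¹) := by group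
      _ = a⁻¹ * (a⁻¹ * m * a * m * a⁻¹) * (a * m * a * m * a⁻¹) := by rw [hB]
      _ = a * m⁻¹ * a⁻¹ * (a * m * a⁻¹ * a⁻¹ * a⁻¹ * m * a * m * m) * a * m * a⁻¹ := by
          group
  exact ⟨heq, fun h => by rw [heq, h]; group⟩
end

section
/- In the group G with presentation ⟨a, m ∣ a m a⁻² m = m a m a⁻¹⟩, let ℓ = m⁻¹ a m a⁻¹ m⁻¹ a⁻¹ m a, u = a and v = a m a m a⁻¹. Then v u⁻³ v = a m (m⁴ ℓ) m⁻¹ a⁻¹. In particular, v u⁻³ v is conjugate to m⁴ℓ, so in the quotient of G by the normal closure of m⁴ℓ the elements u, v satisfy the trefoil relation u³ = v². -/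
/-- In any group generated by elements `a, m` satisfying the figure-eight
relation `a m a⁻² m = m a m a⁻¹` (in particular in the figure-eight knot group
`⟨a, m ∣ a m a⁻² m = m a m a⁻¹⟩`), with longitude `ℓ = m⁻¹ a m a⁻¹ m⁻¹ a⁻¹ m a`
and trefoil generators `u = a`, `v = a m a m a⁻¹`, one has
`v u⁻³ v = a m (m⁴ ℓ) m⁻¹ a⁻¹`; hence `v u⁻³ v` is conjugate to `m⁴ℓ`, and in
the quotient by the normal closure of `m⁴ℓ` (the Dehn filling `M(4,1)`) the
elements `u, v` satisfy the trefoil relation `u³ = v²`. -/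
theorem figure_eight_trefoil_relation {G : Type*} [Group G] (a m : G)
    (hrel : a * m * a⁻¹ * a⁻¹ * m = m * a * m * a⁻¹) :
    (a * m * a * m * a⁻¹) * (a ^ 3)⁻¹ * (a * m * a * m * a⁻¹) =
      a * m * (m ^ 4 * (m⁻¹ * a * m * a⁻¹ * m⁻¹ * a⁻¹ * m * a)) * m⁻¹ * a⁻¹ ∧
    (m ^ 4 * (m⁻¹ * a * m * a⁻¹ * m⁻¹ * a⁻¹ * m * a) = 1 →
      a ^ 3 = (a * m * a * m * a⁻¹) ^ 2) := by
  have h1 : a * m * a⁻¹ * a⁻¹ * m * a * m⁻¹ * a⁻¹ * m⁻¹ = 1 := by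
    rw [hrel]; group
  have h2 : m * a * m * a⁻¹ * m⁻¹ * a * a * m⁻¹ * a⁻¹ = 1 := by
    rw [← hrel]; group
  have main : (a * m * a * m * a⁻¹) * (a ^ 3)⁻¹ * (a * m * a * m * a⁻¹) =
      a * m * (m ^ 4 * (m⁻¹ * a * m * a⁻¹ * m⁻¹ * a⁻¹ * m * a)) * m⁻¹ * a⁻¹ := by
    have key : a * m * a * m * a⁻¹ * a⁻¹ * a⁻¹ * m * a * m * m * a⁻¹ * m⁻¹ * a * m * a * m⁻¹ * a⁻¹ * m⁻¹ * m⁻¹ * m⁻¹ * m⁻¹ * a⁻¹ = 1 := by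
      calc a * m * a * m * a⁻¹ * a⁻¹ * a⁻¹ * m * a * m * m * a⁻¹ * m⁻¹ * a * m * a * m⁻¹ * a⁻¹ * m⁻¹ * m⁻¹ * m⁻¹ * m⁻¹ * a⁻¹
          _ = (a * m * a * m * a⁻¹ * a⁻¹ * a⁻¹ * m * a * m * m * a⁻¹ * m⁻¹ * a * m * a * m⁻¹ * a⁻¹ * m⁻¹) * ((m * a * m * a⁻¹ * m⁻¹ * a * a * m⁻¹ * a⁻¹) * (m⁻¹ * m⁻¹ * m⁻¹ * a⁻¹)) := by rw [h2]; group
          _ = a * m * a * m * a⁻¹ * a⁻¹ * a⁻¹ * m * a * m * m * a⁻¹ * m⁻¹ * a * a * a * m⁻¹ * a⁻¹ * m⁻¹ * m⁻¹ * m⁻¹ * a⁻¹ := by group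
          _ = (a * m * a * m * a⁻¹ * a⁻¹ * a⁻¹) * ((a * m * a⁻¹ * a⁻¹ * m * a * m⁻¹ * a⁻¹ * m⁻¹) * (m * a * m * m * a⁻¹ * m⁻¹ * a * a * a * m⁻¹ * a⁻¹ * m⁻¹ * m⁻¹ * m⁻¹ * a⁻¹)) := by rw [h1]; group
          _ = a * m * a * m * a⁻¹ * a⁻¹ * m * a⁻¹ * a⁻¹ * m * a * m * a⁻¹ * m⁻¹ * a * a * a * m⁻¹ * a⁻¹ * m⁻¹ * m⁻¹ * m⁻¹ * a⁻¹ := by group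
          _ = (a * m * a * m * a⁻¹ * a⁻¹ * m * a⁻¹ * a⁻¹) * ((a * m * a⁻¹ * a⁻¹ * m * a * m⁻¹ * a⁻¹ * m⁻¹) * (m * a * m * a⁻¹ * m⁻¹ * a * a * a * m⁻¹ * a⁻¹ * m⁻¹ * m⁻¹ * m⁻¹ * a⁻¹)) := by rw [h1]; group
          _ = a * m * a * m * a⁻¹ * a⁻¹ * m * a⁻¹ * m * a * m⁻¹ * a⁻¹ * m⁻¹ * m⁻¹ * m⁻¹ * a⁻¹ := by group
          _ = (a * m * a * m * a⁻¹ * a⁻¹ * m * a⁻¹ * m * a * m⁻¹ * a⁻¹ * m⁻¹) * ((m * a * m * a⁻¹ * m⁻¹ * a * a * m⁻¹ * a⁻¹) * (m⁻¹ * m⁻¹ * a⁻¹)) := by rw [h2]; group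
          _ = a * m * a * m * a⁻¹ * a⁻¹ * m * a * m⁻¹ * a⁻¹ * m⁻¹ * m⁻¹ * a⁻¹ := by group
          _ = (a * m) * ((m * a * m * a⁻¹ * m⁻¹ * a * a * m⁻¹ * a⁻¹) * (a * m * a⁻¹ * a⁻¹ * m * a * m⁻¹ * a⁻¹ * m⁻¹ * m⁻¹ * a⁻¹)) := by rw [h2]; group
          _ = 1 := by group
    have := key
    calc (a * m * a * m * a⁻¹) * (a ^ 3)⁻¹ * (a * m * a * m * a⁻¹)
        _ = (a * m * a * m * a⁻¹ * a⁻¹ * a⁻¹ * m * a * m * m * a⁻¹ * m⁻¹ * a * m * a * m⁻¹ * a⁻¹ * m⁻¹ * m⁻¹ * m⁻¹ * m⁻¹ * a⁻¹) *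
            (a * m * (m ^ 4 * (m⁻¹ * a * m * a⁻¹ * m⁻¹ * a⁻¹ * m * a)) * m⁻¹ * a⁻¹) := by group
        _ = 1 * (a * m * (m ^ 4 * (m⁻¹ * a * m * a⁻¹ * m⁻¹ * a⁻¹ * m * a)) * m⁻¹ * a⁻¹) := by rw [key]
        _ = a * m * (m ^ 4 * (m⁻¹ * a * m * a⁻¹ * m⁻¹ * a⁻¹ * m * a)) * m⁻¹ * a⁻¹ := by rw [one_mul]
  refine ⟨main, fun hq => ?_⟩
  rw [hq] at main
  have hv : (a * m * a * m * a⁻¹) * (a ^ 3)⁻¹ * (a * m * a * m * a⁻¹) = 1 := by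
    rw [main]; group
  calc a ^ 3
      _ = (a * m * a * m * a⁻¹) *
          ((a * m * a * m * a⁻¹) * (a ^ 3)⁻¹ * (a * m * a * m * a⁻¹))⁻¹ *
          (a * m * a * m * a⁻¹) := by group
      _ = (a * m * a * m * a⁻¹) * 1⁻¹ * (a * m * a * m * a⁻¹) := by rw [hv]
      _ = (a * m * a * m * a⁻¹) * (a * m * a * m * a⁻¹) := by group
      _ = (a * m * a * m * a⁻¹) ^ 2 := by rw [sq]
end
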